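/- Integral convolution decay lemma: Let γ₁, γ₂ be positive real numbers with either γ₁, γ₂ ≠ 1, or γ₁ = 1 < γ₂. Then there exists a constant C > 0 (depending on γ₁, γ₂) such that ∫₀ᵗ (1 + t − s)^{−γ₁} (1 + s)^{−γ₂} ds ≤ C (1 + t)^{−min{γ₁ + γ₂ − 1, γ₁, γ₂}} for all t ≥ 0. -/

import Mathlib

/-!
Split `[0, t]` at `t / 2`. On the first half `1 + t - s ≥ (1 + t) / 2`, so the first factor is
at most `2 ^ γ₁ (1 + t) ^ (-γ₁)` and what remains is `∫₀^{t/2} (1 + s) ^ (-γ₂)`, which grows like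
`(1 + t) ^ max (1 - γ₂) 0` (like `log (1 + t)`, hence like any positive power, when `γ₂ = 1`).
The substitution `s ↦ t - s` turns the second half into the first with `γ₁, γ₂` exchanged.
-/

open Real MeasureTheory intervalIntegral Set

lemma intervalIntegrable_one_add_rpow (r : ℝ) {a : ℝ} (ha : 0 ≤ a) :
    IntervalIntegrable (fun s : ℝ => (1 + s) ^ r) volume 0 a := by
  refine ContinuousOn.intervalIntegrable (ContinuousOn.rpow_const (by fun_prop) fun s hs => ?_)
  rw [uIcc_of_le ha] at hs
  exact Or.inl (by linarith [hs.1])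

lemma integral_one_add_rpow {r : ℝ} (hr : r ≠ -1) {a : ℝ} (ha : 0 ≤ a) :
    ∫ s in (0 : ℝ)..a, (1 + s) ^ r = ((1 + a) ^ (r + 1) - 1) / (r + 1) := by
  have h0 : (0 : ℝ) ∉ uIcc 1 (1 + a) := by
    rw [uIcc_of_le (by linarith)]
    exact fun h => by linarith [h.1]
  rw [integral_comp_add_left (fun u => u ^ r), add_zero, integral_rpow (Or.inr ⟨hr, h0⟩),
    one_rpow]

lemma integral_one_add_rpow_neg_le_of_one_lt {β : ℝ} (hβ : 1 < β) {a : ℝ} (ha : 0 ≤ a) :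
    ∫ s in (0 : ℝ)..a, (1 + s) ^ (-β) ≤ 1 / (β - 1) := by
  rw [integral_one_add_rpow (by linarith) ha, show -β + 1 = -(β - 1) by ring, div_neg,
    ← neg_div, neg_sub]
  gcongr
  linarith [rpow_nonneg (by linarith : (0 : ℝ) ≤ 1 + a) (-(β - 1))]

lemma integral_one_add_rpow_neg_le_rpow {β e : ℝ} (he : 0 < e) (hβe : 1 - β ≤ e) {a : ℝ}
    (ha : 0 ≤ a) : ∫ s in (0 : ℝ)..a, (1 + s) ^ (-β) ≤ (1 + a) ^ e / e :=
  calc ∫ s in (0 : ℝ)..a, (1 + s) ^ (-β)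
      ≤ ∫ s in (0 : ℝ)..a, (1 + s) ^ (e - 1) := by
        refine integral_mono_on ha (intervalIntegrable_one_add_rpow _ ha)
          (intervalIntegrable_one_add_rpow _ ha) fun s hs => ?_
        exact rpow_le_rpow_of_exponent_le (by linarith [hs.1]) (by linarith)
    _ = ((1 + a) ^ e - 1) / e := by
        rw [integral_one_add_rpow (by linarith) ha, sub_add_cancel]
    _ ≤ (1 + a) ^ e / e := by gcongr; linarith

lemma exists_integral_one_add_rpow_neg_le {β e : ℝ} (he : 0 ≤ e) (hβe : 1 - β ≤ e)
    (h1 : β = 1 → 0 < e) :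
    ∃ C > 0, ∀ a ≥ 0, ∫ s in (0 : ℝ)..a, (1 + s) ^ (-β) ≤ C * (1 + a) ^ e := by
  rcases he.lt_or_eq with he | rfl
  · exact ⟨1 / e, by positivity, fun a ha => by
      simpa [div_eq_inv_mul] using integral_one_add_rpow_neg_le_rpow he hβe ha⟩
  · have hβ : 1 < β := lt_of_le_of_ne (by linarith) fun h => (h1 h.symm).false
    exact ⟨1 / (β - 1), by simpa using hβ, fun a ha => by
      simpa using integral_one_add_rpow_neg_le_of_one_lt hβ ha⟩

lemma intervalIntegrable_one_add_sub_rpow_mul_one_add_rpow (α β : ℝ) {t a b : ℝ}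
    (ha : a ∈ Icc 0 t) (hb : b ∈ Icc 0 t) :
    IntervalIntegrable (fun s : ℝ => (1 + t - s) ^ (-α) * (1 + s) ^ (-β)) volume a b := by
  refine ContinuousOn.intervalIntegrable (ContinuousOn.mul
    (ContinuousOn.rpow_const (by fun_prop) fun s hs => ?_)
    (ContinuousOn.rpow_const (by fun_prop) fun s hs => ?_))
  · exact Or.inl (by linarith [(uIcc_subset_Icc ha hb hs).2])
  · exact Or.inl (by linarith [(uIcc_subset_Icc ha hb hs).1])

lemma exists_integral_zero_half_le_rpow_neg {α β m : ℝ} (hα : 0 ≤ α) (hmα : m ≤ α)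
    (hm : m ≤ α + β - 1) (hβ : β = 1 → m < α) :
    ∃ C > 0, ∀ t ≥ (0 : ℝ),
      ∫ s in (0 : ℝ)..t / 2, (1 + t - s) ^ (-α) * (1 + s) ^ (-β) ≤ C * (1 + t) ^ (-m) := by
  obtain ⟨C, hC, hJ⟩ := exists_integral_one_add_rpow_neg_le (e := α - m) (β := β)
    (by linarith) (by linarith) fun h => by linarith [hβ h]
  refine ⟨2 ^ α * C, by positivity, fun t ht => ?_⟩
  have ht2 : 0 ≤ t / 2 := by linarith
  have hhalf : 0 < (1 + t) / 2 := by linarith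
  calc ∫ s in (0 : ℝ)..t / 2, (1 + t - s) ^ (-α) * (1 + s) ^ (-β)
      ≤ ∫ s in (0 : ℝ)..t / 2, ((1 + t) / 2) ^ (-α) * (1 + s) ^ (-β) := by
        refine integral_mono_on ht2 (intervalIntegrable_one_add_sub_rpow_mul_one_add_rpow α β
          (left_mem_Icc.2 ht) ⟨ht2, by linarith⟩)
          ((intervalIntegrable_one_add_rpow _ ht2).const_mul _) fun s hs => ?_
        exact mul_le_mul_of_nonneg_right
          (rpow_le_rpow_of_nonpos hhalf (by linarith [hs.2]) (by linarith))
          (rpow_nonneg (by linarith [hs.1]) _)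
    _ ≤ ((1 + t) / 2) ^ (-α) * (C * (1 + t) ^ (α - m)) := by
        rw [intervalIntegral.integral_const_mul]
        gcongr
        calc _ ≤ C * (1 + t / 2) ^ (α - m) := hJ _ ht2
          _ ≤ C * (1 + t) ^ (α - m) := by gcongr; linarith
    _ = 2 ^ α * C * (1 + t) ^ (-m) := by
        have hexp : (1 + t) ^ (-α) * (1 + t) ^ (α - m) = (1 + t) ^ (-m) := by
          rw [← rpow_add (by linarith)]
          ring_nf
        rw [div_rpow (by linarith) zero_le_two, rpow_neg zero_le_two, div_inv_eq_mul, ← hexp]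
        ring

lemma integral_half_to_self_eq_swap (α β t : ℝ) :
    ∫ s in t / 2..t, (1 + t - s) ^ (-α) * (1 + s) ^ (-β)
      = ∫ s in (0 : ℝ)..t / 2, (1 + t - s) ^ (-β) * (1 + s) ^ (-α) := by
  have h := integral_comp_sub_left (a := t / 2) (b := t)
    (fun u => (1 + t - u) ^ (-β) * (1 + u) ^ (-α)) t
  rw [sub_self, sub_half] at h
  rw [← h]
  congr 1 with s
  rw [mul_comm]
  ring_nf

/-- Integral convolution decay lemma:
∫₀ᵗ (1+t−s)^{−γ₁}(1+s)^{−γ₂} ds ≤ C (1+t)^{−min{γ₁+γ₂−1, γ₁, γ₂}}. -/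
theorem integral_convolution_decay
    (γ₁ γ₂ : ℝ) (h₁ : 0 < γ₁) (h₂ : 0 < γ₂)
    (hcase : (γ₁ ≠ 1 ∧ γ₂ ≠ 1) ∨ (γ₁ = 1 ∧ 1 < γ₂)) :
    ∃ C > (0 : ℝ), ∀ t ≥ (0 : ℝ),
      (∫ s in (0 : ℝ)..t, (1 + t - s) ^ (-γ₁) * (1 + s) ^ (-γ₂))
        ≤ C * (1 + t) ^ (-(min (γ₁ + γ₂ - 1) (min γ₁ γ₂))) := by
  set m := min (γ₁ + γ₂ - 1) (min γ₁ γ₂)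
  have hm : m ≤ γ₁ + γ₂ - 1 := min_le_left _ _
  have hm₁ : m ≤ γ₁ := (min_le_right _ _).trans (min_le_left _ _)
  have hm₂ : m ≤ γ₂ := (min_le_right _ _).trans (min_le_right _ _)
  have hγ₂ : γ₂ ≠ 1 := hcase.elim (·.2) (·.2.ne')
  have hγ₁ : γ₁ = 1 → 1 < γ₂ := fun h => hcase.elim (absurd h ·.1) (·.2)
  obtain ⟨C₁, hC₁, hfirst⟩ :=
    exists_integral_zero_half_le_rpow_neg h₁.le hm₁ hm fun h => absurd h hγ₂
  obtain ⟨C₂, hC₂, hsecond⟩ := exists_integral_zero_half_le_rpow_neg (β := γ₁) h₂.le hm₂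
    (by linarith) fun h => by linarith [hγ₁ h]
  refine ⟨C₁ + C₂, by positivity, fun t ht => ?_⟩
  have hmid : t / 2 ∈ Icc 0 t := ⟨by linarith, by linarith⟩
  rw [← integral_add_adjacent_intervals
    (intervalIntegrable_one_add_sub_rpow_mul_one_add_rpow γ₁ γ₂ (left_mem_Icc.2 ht) hmid)
    (intervalIntegrable_one_add_sub_rpow_mul_one_add_rpow γ₁ γ₂ hmid (right_mem_Icc.2 ht)),
    integral_half_to_self_eq_swap, add_mul]
  exact add_le_add (hfirst t ht) (hsecond t ht)
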